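/- arXiv:2510.16153 — 2 statements merged into one kernel-verified Lean document; each statement's English description precedes it below -/
import Mathlib

section
/- Let T be the 9×9 integer matrix with rows [1,1,1,1,1,1,1,0,1],[0,1,0,1,0,1,1,0,0],[0,0,1,1,0,1,0,0,1],[0,1,1,1,0,1,1,0,0],[0,0,0,0,1,1,1,0,1],[0,0,0,0,1,1,1,1,0],[0,0,0,0,1,1,1,0,0],[0,0,0,0,1,0,0,1,0],[0,0,0,0,0,1,0,0,1]. Then x^2 − 3x − 1 divides the characteristic polynomial of T, so (3+√13)/2 is an eigenvalue of T. -/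
open Polynomial

def grahamT : Matrix (Fin 9) (Fin 9) ℤ :=
  !![1,1,1,1,1,1,1,0,1;
     0,1,0,1,0,1,1,0,0;
     0,0,1,1,0,1,0,0,1;
     0,1,1,1,0,1,1,0,0;
     0,0,0,0,1,1,1,0,1;
     0,0,0,0,1,1,1,1,0;
     0,0,0,0,1,1,1,0,0;
     0,0,0,0,1,0,0,1,0;
     0,0,0,0,0,1,0,0,1]

section aux
variable {α : Type*} (a₀ a₁ a₂ a₃ a₄ a₅ a₆ a₇ a₈ : α)

@[simp] lemma cons9_five : (![a₀,a₁,a₂,a₃,a₄,a₅,a₆,a₇,a₈] : Fin 9 → α) 5 = a₅ := rfl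
@[simp] lemma cons9_six : (![a₀,a₁,a₂,a₃,a₄,a₅,a₆,a₇,a₈] : Fin 9 → α) 6 = a₆ := rfl
@[simp] lemma cons9_seven : (![a₀,a₁,a₂,a₃,a₄,a₅,a₆,a₇,a₈] : Fin 9 → α) 7 = a₇ := rfl
@[simp] lemma cons9_eight : (![a₀,a₁,a₂,a₃,a₄,a₅,a₆,a₇,a₈] : Fin 9 → α) 8 = a₈ := rfl

@[simp] lemma vecHead_const {n : ℕ} (c : α) :
    Matrix.vecHead (fun _ : Fin (n+1) => c) = c := rfl
@[simp] lemma vecTail_const {n : ℕ} (c : α) :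
    Matrix.vecTail (fun _ : Fin (n+1) => c) = fun _ : Fin n => c := rfl

end aux

lemma sum_univ_nine {β : Type*} [AddCommMonoid β] (f : Fin 9 → β) :
    ∑ i, f i = f 0 + f 1 + f 2 + f 3 + f 4 + f 5 + f 6 + f 7 + f 8 := by
  rw [Fin.sum_univ_castSucc, Fin.sum_univ_eight]
  rfl

lemma eval_charpoly_real (M : Matrix (Fin 9) (Fin 9) ℝ) (r : ℝ) :
    Polynomial.eval r M.charpoly = (r • (1 : Matrix (Fin 9) (Fin 9) ℝ) - M).det := by
  rw [Matrix.charpoly, ← Polynomial.coe_evalRingHom, RingHom.map_det]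
  congr 1
  ext i j
  by_cases h : i = j <;>
    simp [h, Matrix.charmatrix_apply, Matrix.one_apply, Matrix.diagonal]

lemma root_of_eigen (M : Matrix (Fin 9) (Fin 9) ℝ) (r : ℝ) (u : Fin 9 → ℝ) (hu : u ≠ 0)
    (he : M.mulVec u = r • u) : Polynomial.eval r M.charpoly = 0 := by
  rw [eval_charpoly_real, ← Matrix.exists_mulVec_eq_zero_iff]
  exact ⟨u, hu, by
    rw [Matrix.sub_mulVec, Matrix.smul_mulVec, Matrix.one_mulVec, he, sub_self]⟩

set_option maxHeartbeats 2000000 in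
/-- `x^2 - 3x - 1` divides the characteristic polynomial of the transfer
matrix `T`, so `(3 + √13)/2` is an eigenvalue of `T` over `ℝ`. -/
theorem transfer_eigenvalue :
    ((X ^ 2 - 3 * X - 1 : Polynomial ℤ) ∣ grahamT.charpoly) ∧
    Polynomial.aeval ((3 + Real.sqrt 13) / 2) grahamT.charpoly = 0 ∧
    ∃ v : Fin 9 → ℝ, v ≠ 0 ∧
      (grahamT.map (Int.cast : ℤ → ℝ)).mulVec v =
        ((3 + Real.sqrt 13) / 2) • v := by
  have hs : Real.sqrt 13 ^ 2 = 13 := Real.sq_sqrt (by norm_num)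
  have hspos : 0 < Real.sqrt 13 := Real.sqrt_pos.mpr (by norm_num)
  set s : ℝ := Real.sqrt 13 with hsdef
  set α : ℝ := (3 + s) / 2 with hα
  set β : ℝ := (3 - s) / 2 with hβ
  set Mr : Matrix (Fin 9) (Fin 9) ℝ := grahamT.map (Int.cast : ℤ → ℝ) with hMr
  set v : Fin 9 → ℝ := ![29+7*s, 7+5*s, 8+4*s, 21+3*s, 3+3*s, 3+3*s, 12, 6, 6] with hvdef
  set w : Fin 9 → ℝ := ![29-7*s, 7-5*s, 8-4*s, 21-3*s, 3-3*s, 3-3*s, 12, 6, 6] with hwdef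
  have hM : Mr = !![(1:ℝ),1,1,1,1,1,1,0,1;
     0,1,0,1,0,1,1,0,0;
     0,0,1,1,0,1,0,0,1;
     0,1,1,1,0,1,1,0,0;
     0,0,0,0,1,1,1,0,1;
     0,0,0,0,1,1,1,1,0;
     0,0,0,0,1,1,1,0,0;
     0,0,0,0,1,0,0,1,0;
     0,0,0,0,0,1,0,0,1] := by
    rw [hMr]
    ext i j
    fin_cases i <;> fin_cases j <;> simp [grahamT, -Matrix.cons_val']
  have hv : Mr.mulVec v = α • v := by
    rw [hM]
    funext i
    fin_cases i <;>
      · simp [Matrix.mulVec, dotProduct, sum_univ_nine, hvdef, hα, -Matrix.cons_val']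
        nlinarith [hs]
  have hw : Mr.mulVec w = β • w := by
    rw [hM]
    funext i
    fin_cases i <;>
      · simp [Matrix.mulVec, dotProduct, sum_univ_nine, hwdef, hβ, -Matrix.cons_val']
        nlinarith [hs]
  have hv0 : v ≠ 0 := by
    intro h
    have := congrFun h 6
    simp [hvdef] at this
  have hw0 : w ≠ 0 := by
    intro h
    have := congrFun h 6
    simp [hwdef] at this
  have evalα : Polynomial.eval α Mr.charpoly = 0 := root_of_eigen Mr α v hv0 hv
  have evalβ : Polynomial.eval β Mr.charpoly = 0 := root_of_eigen Mr β w hw0 hw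
  have hmap : Mr.charpoly = grahamT.charpoly.map (Int.castRingHom ℝ) :=
    Matrix.charpoly_map grahamT (Int.castRingHom ℝ)
  have hαβ : α ≠ β := by
    rw [hα, hβ]; intro h; nlinarith only [h, hspos]
  have hsum : α + β = 3 := by rw [hα, hβ]; ring
  have hprod : α * β = -1 := by
    rw [hα, hβ]; nlinarith only [hs]
  have hpoly : ((X ^ 2 - 3 * X - 1 : Polynomial ℤ).map (Int.castRingHom ℝ)) =
      (X - C α) * (X - C β) := by
    have h1 : (X - C α) * (X - C β) = X ^ 2 - (C α + C β) * X + C α * C β := by ring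
    rw [h1, ← C_add, ← C_mul, hsum, hprod]
    simp [Polynomial.map_sub, Polynomial.map_mul, Polynomial.map_pow, map_ofNat]
    ring
  have hcop : IsCoprime (X - C α) (X - C β) :=
    Polynomial.isCoprime_X_sub_C_of_isUnit_sub (isUnit_iff_ne_zero.mpr (sub_ne_zero_of_ne hαβ))
  have hdvdα : (X - C α) ∣ Mr.charpoly := dvd_iff_isRoot.mpr evalα
  have hdvdβ : (X - C β) ∣ Mr.charpoly := dvd_iff_isRoot.mpr evalβ
  have hmul : (X - C α) * (X - C β) ∣ Mr.charpoly := hcop.mul_dvd hdvdα hdvdβ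
  have hmonic : (X ^ 2 - 3 * X - 1 : Polynomial ℤ).Monic := by
    monicity!
  refine ⟨?_, ?_, ⟨v, hv0, hv⟩⟩
  · rw [← Polynomial.map_dvd_map (Int.castRingHom ℝ) Int.cast_injective hmonic, hpoly, ← hmap]
    exact hmul
  · rw [Polynomial.aeval_def, Polynomial.eval₂_eq_eval_map, algebraMap_int_eq, ← hmap]
    exact evalα
end

section
/- Let z be the positive real root of x^4 + 3x^2 − 1 and define c_n as the coefficients of the power series of x(2x^8−4x^7+8x^6−7x^5+3x^4+2x^3−5x^2+x+1)/((x−1)^2(x^4+3x^2−1)(x^4+2x^2−1)). Then c_n · z^n is a bounded sequence, and more precisely c_n z^n converges along even n and along odd n to the limits (89z^2 ± 92z + 218 ± 86z^{−1})/234 respectively (plus signs for even n, adjusted appropriately). -/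
/-
Partial fractions over `ℚ` split the generating function as
`N/D = (11x - 8)/(18(1 - x)²) + (13 + 34x + 25x² - 8x³)/(9(1 - 3x² - x⁴))
  - (2 + 5x + 4x² + x³)/(2(1 - 2x² - x⁴))`,
so `c_n` is the sum of an affine sequence and, separately on even and on odd indices,
Binet-type sums `a λ₊ᵏ + b λ₋ᵏ` and `a' μ₊ᵏ + b' μ₋ᵏ`, where `λ± = (3 ± √13)/2` are the roots of
`y² = 3y + 1` and `μ± = 1 ± √2` those of `y² = 2y + 1`. Since `z² = (√13 - 3)/2 = 1/λ₊` while
`|λ₋|, |μ±| < λ₊`, only the `λ₊ᵏ` terms survive multiplication by `z^(2k)`.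
-/
open Polynomial Filter

noncomputable def grahamNum : Polynomial ℤ :=
  X * (2 * X ^ 8 - 4 * X ^ 7 + 8 * X ^ 6 - 7 * X ^ 5 + 3 * X ^ 4 +
    2 * X ^ 3 - 5 * X ^ 2 + X + 1)

noncomputable def grahamDen : Polynomial ℤ :=
  (X - 1) ^ 2 * (X ^ 4 + 3 * X ^ 2 - 1) * (X ^ 4 + 2 * X ^ 2 - 1)

open Topology

section Interleave

variable {α : Type*}

def interleave (e o : ℕ → α) (n : ℕ) : α :=
  if n % 2 = 0 then e (n / 2) else o (n / 2)

@[simp]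
theorem interleave_two_mul (e o : ℕ → α) (k : ℕ) : interleave e o (2 * k) = e k := by
  rw [interleave, if_pos (by omega), Nat.mul_div_cancel_left k two_pos]

@[simp]
theorem interleave_two_mul_add_one (e o : ℕ → α) (k : ℕ) :
    interleave e o (2 * k + 1) = o k := by
  rw [interleave, if_neg (by omega), show (2 * k + 1) / 2 = k by omega]

theorem interleave_add_four [Semiring α] {e o : ℕ → α} {p q : α}
    (he : ∀ k, e (k + 2) = p * e (k + 1) + q * e k)
    (ho : ∀ k, o (k + 2) = p * o (k + 1) + q * o k) (n : ℕ) :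
    interleave e o (n + 4) = p * interleave e o (n + 2) + q * interleave e o n := by
  obtain ⟨k, rfl | rfl⟩ := Nat.even_or_odd' n
  · simpa [show 2 * k + 4 = 2 * (k + 2) by ring, show 2 * k + 2 = 2 * (k + 1) by ring] using he k
  · simpa [show 2 * k + 1 + 4 = 2 * (k + 2) + 1 by ring,
      show 2 * k + 1 + 2 = 2 * (k + 1) + 1 by ring] using ho k

end Interleave

section Binet

variable {R : Type*} [CommRing R]

def binet (a b x y : R) (k : ℕ) : R := a * x ^ k + b * y ^ k

theorem binet_add_two {a b x y p q : R} (hx : x ^ 2 = p * x + q) (hy : y ^ 2 = p * y + q)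
    (k : ℕ) : binet a b x y (k + 2) = p * binet a b x y (k + 1) + q * binet a b x y k := by
  unfold binet
  linear_combination a * x ^ k * hx + b * y ^ k * hy

theorem tendsto_binet_mul_pow {a b x y w l : ℝ} (hx : Tendsto (fun k ↦ (x * w) ^ k) atTop (𝓝 l))
    (hy : |y * w| < 1) : Tendsto (fun k ↦ binet a b x y k * w ^ k) atTop (𝓝 (a * l)) := by
  have hsum := (hx.const_mul a).add ((tendsto_pow_atTop_nhds_zero_of_abs_lt_one hy).const_mul b)
  rw [mul_zero, add_zero] at hsum
  refine hsum.congr fun k ↦ ?_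
  simp only [binet, mul_pow]
  ring

end Binet

theorem tendsto_affine_mul_pow {w : ℝ} (hw : |w| < 1) (a b : ℝ) :
    Tendsto (fun k : ℕ ↦ (a + b * k) * w ^ k) atTop (𝓝 0) := by
  have hsum := ((tendsto_pow_atTop_nhds_zero_of_abs_lt_one hw).const_mul a).add
    ((tendsto_self_mul_const_pow_of_abs_lt_one hw).const_mul b)
  rw [mul_zero, mul_zero, add_zero] at hsum
  exact hsum.congr fun k ↦ by ring

theorem exists_forall_abs_le_of_tendsto_even_odd {u : ℕ → ℝ} {a b : ℝ}
    (he : Tendsto (fun k ↦ u (2 * k)) atTop (𝓝 a))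
    (ho : Tendsto (fun k ↦ u (2 * k + 1)) atTop (𝓝 b)) : ∃ C, ∀ n, |u n| ≤ C := by
  obtain ⟨Ce, hCe⟩ := he.abs.bddAbove_range
  obtain ⟨Co, hCo⟩ := ho.abs.bddAbove_range
  refine ⟨max Ce Co, fun n ↦ ?_⟩
  obtain ⟨k, rfl | rfl⟩ := Nat.even_or_odd' n
  · exact (hCe ⟨k, rfl⟩).trans (le_max_left _ _)
  · exact (hCo ⟨k, rfl⟩).trans (le_max_right _ _)

namespace PowerSeries

variable {R : Type*} [CommRing R]

theorem mk_mul_eq_of_recurrence {u : ℕ → R} {a b : R} {k : ℕ} {p : R⟦X⟧}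
    (hu : ∀ n, u (n + 2 * k) = a * u (n + k) + b * u n)
    (hp : ∀ n, coeff n p = if n < 2 * k then u n - (if k ≤ n then a * u (n - k) else 0) else 0) :
    mk u * (1 - C a * X ^ k - C b * X ^ (2 * k)) = p := by
  ext n
  simp only [hp, mul_sub, mul_one, mul_left_comm _ (C _), map_sub, coeff_mk, coeff_C_mul,
    coeff_mul_X_pow']
  rcases lt_or_ge n (2 * k) with hn | hn
  · simp [hn, not_le.mpr hn]
  · obtain ⟨m, rfl⟩ := Nat.exists_eq_add_of_le' hn
    rw [if_pos (show k ≤ m + 2 * k by omega), if_pos hn, if_neg (not_lt.mpr hn),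
      Nat.add_sub_cancel, show m + 2 * k - k = m + k by omega, hu]
    ring

end PowerSeries

namespace Graham

/- The three parts are the coefficients of the partial fractions scaled by 18, 9 and 2, so that
they are integer-valued: `dominantPart` starts 13, 34, 64, 94 and `subdominantPart` starts
-2, -5, -8, -11, which fixes the Binet constants. -/
noncomputable def linearPart (n : ℕ) : ℝ := 3 * n - 8

noncomputable def dominantPart : ℕ → ℝ :=
  interleave
    (binet ((169 + 89 * √13) / 26) ((169 - 89 * √13) / 26) ((3 + √13) / 2) ((3 - √13) / 2))
    (binet ((221 + 43 * √13) / 13) ((221 - 43 * √13) / 13) ((3 + √13) / 2) ((3 - √13) / 2))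

noncomputable def subdominantPart : ℕ → ℝ :=
  interleave (binet (-(2 + 3 * √2) / 2) ((-2 + 3 * √2) / 2) (1 + √2) (1 - √2))
    (binet (-(5 + 3 * √2) / 2) ((-5 + 3 * √2) / 2) (1 + √2) (1 - √2))

noncomputable def closedForm (n : ℕ) : ℝ :=
  linearPart n / 18 + dominantPart n / 9 + subdominantPart n / 2

theorem linearPart_add_two (n : ℕ) :
    linearPart (n + 2) = 2 * linearPart (n + 1) - linearPart n := by
  simp only [linearPart]
  push_cast
  ring

theorem dominantPart_add_four (n : ℕ) :
    dominantPart (n + 4) = 3 * dominantPart (n + 2) + dominantPart n := by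
  have hs : √13 ^ 2 = 13 := Real.sq_sqrt (by norm_num)
  have hp : ((3 + √13) / 2) ^ 2 = 3 * ((3 + √13) / 2) + 1 := by linear_combination hs / 4
  have hm : ((3 - √13) / 2) ^ 2 = 3 * ((3 - √13) / 2) + 1 := by linear_combination hs / 4
  unfold dominantPart
  simpa only [one_mul] using interleave_add_four (binet_add_two hp hm) (binet_add_two hp hm) n

theorem subdominantPart_add_four (n : ℕ) :
    subdominantPart (n + 4) = 2 * subdominantPart (n + 2) + subdominantPart n := by
  have hs : √2 ^ 2 = 2 := Real.sq_sqrt (by norm_num)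
  have hp : (1 + √2) ^ 2 = 2 * (1 + √2) + 1 := by linear_combination hs
  have hm : (1 - √2) ^ 2 = 2 * (1 - √2) + 1 := by linear_combination hs
  unfold subdominantPart
  simpa only [one_mul] using interleave_add_four (binet_add_two hp hm) (binet_add_two hp hm) n

theorem dominantPart_values :
    dominantPart 0 = 13 ∧ dominantPart 1 = 34 ∧ dominantPart 2 = 64 ∧ dominantPart 3 = 94 := by
  have hs : √13 ^ 2 = 13 := Real.sq_sqrt (by norm_num)
  refine ⟨?_, ?_, ?_, ?_⟩ <;> norm_num [dominantPart, interleave, binet] <;> linarith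

theorem subdominantPart_values :
    subdominantPart 0 = -2 ∧ subdominantPart 1 = -5 ∧ subdominantPart 2 = -8 ∧
      subdominantPart 3 = -11 := by
  have hs : √2 ^ 2 = 2 := Real.sq_sqrt (by norm_num)
  refine ⟨?_, ?_, ?_, ?_⟩ <;> norm_num [subdominantPart, interleave, binet] <;> linarith

end Graham

/- Stated inside `PowerSeries` so that `X` and `C` are the power-series ones, not those of the
open namespace `Polynomial`. -/
namespace PowerSeries

open Graham

theorem _root_.Graham.mk_linearPart_mul : mk linearPart * (1 - X) ^ 2 = 11 * X - 8 := by
  simp only [← map_ofNat C]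
  rw [show (1 - X) ^ 2 = 1 - C (2 : ℝ) * X ^ 1 - C (-1) * X ^ (2 * 1) by
    simp only [map_neg, map_one, map_ofNat]; ring]
  refine mk_mul_eq_of_recurrence (fun n ↦ (linearPart_add_two n).trans (by ring)) fun n ↦ ?_
  rcases n with _ | _ | n <;> norm_num [linearPart]

theorem _root_.Graham.mk_dominantPart_mul :
    mk dominantPart * (1 - 3 * X ^ 2 - X ^ 4) = 13 + 34 * X + 25 * X ^ 2 - 8 * X ^ 3 := by
  simp only [← map_ofNat C]
  rw [show X ^ 4 = C (1 : ℝ) * X ^ (2 * 2) by simp]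
  refine mk_mul_eq_of_recurrence (fun n ↦ (dominantPart_add_four n).trans (by ring)) fun n ↦ ?_
  rcases n with _ | _ | _ | _ | n <;> simp [coeff_X_pow, dominantPart_values] <;> norm_num

theorem _root_.Graham.mk_subdominantPart_mul :
    mk subdominantPart * (1 - 2 * X ^ 2 - X ^ 4) = -2 - 5 * X - 4 * X ^ 2 - X ^ 3 := by
  simp only [← map_ofNat C]
  rw [show X ^ 4 = C (1 : ℝ) * X ^ (2 * 2) by simp]
  refine mk_mul_eq_of_recurrence (fun n ↦ (subdominantPart_add_four n).trans (by ring))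
    fun n ↦ ?_
  rcases n with _ | _ | _ | _ | n <;> simp [coeff_X_pow, subdominantPart_values] <;> norm_num

theorem _root_.Graham.mk_closedForm_mul :
    mk closedForm * ((1 - X) ^ 2 * (1 - 3 * X ^ 2 - X ^ 4) * (1 - 2 * X ^ 2 - X ^ 4)) =
      X + X ^ 2 - 5 * X ^ 3 + 2 * X ^ 4 + 3 * X ^ 5 - 7 * X ^ 6 + 8 * X ^ 7 - 4 * X ^ 8 +
        2 * X ^ 9 := by
  have hsplit :
      18 * mk closedForm = mk linearPart + 2 * mk dominantPart + 9 * mk subdominantPart := by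
    ext n
    simp only [← map_ofNat C, coeff_C_mul, coeff_mk, closedForm, map_add]
    ring
  have h18 : (18 : ℝ⟦X⟧) ≠ 0 := by
    rw [← map_ofNat C]
    simp
  refine mul_left_cancel₀ h18 ?_
  linear_combination (1 - 3 * X ^ 2 - X ^ 4) * (1 - 2 * X ^ 2 - X ^ 4) * mk_linearPart_mul +
    2 * (1 - X) ^ 2 * (1 - 2 * X ^ 2 - X ^ 4) * mk_dominantPart_mul +
    9 * (1 - X) ^ 2 * (1 - 3 * X ^ 2 - X ^ 4) * mk_subdominantPart_mul +
    (1 - X) ^ 2 * (1 - 3 * X ^ 2 - X ^ 4) * (1 - 2 * X ^ 2 - X ^ 4) * hsplit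

theorem _root_.Graham.map_grahamDen {S : Type*} [CommRing S] :
    map (Int.castRingHom S) (grahamDen : ℤ⟦X⟧) =
      (1 - X) ^ 2 * (1 - 3 * X ^ 2 - X ^ 4) * (1 - 2 * X ^ 2 - X ^ 4) := by
  rw [← Polynomial.coeToPowerSeries.ringHom_apply]
  simp only [grahamDen, map_mul, map_sub, map_add, map_pow, map_one, map_ofNat,
    Polynomial.coeToPowerSeries.ringHom_apply, Polynomial.coe_X, map_X]
  ring

theorem _root_.Graham.map_grahamNum {S : Type*} [CommRing S] :
    map (Int.castRingHom S) (grahamNum : ℤ⟦X⟧) =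
      X + X ^ 2 - 5 * X ^ 3 + 2 * X ^ 4 + 3 * X ^ 5 - 7 * X ^ 6 + 8 * X ^ 7 - 4 * X ^ 8 +
        2 * X ^ 9 := by
  rw [← Polynomial.coeToPowerSeries.ringHom_apply]
  simp only [grahamNum, map_mul, map_sub, map_add, map_pow, map_one, map_ofNat,
    Polynomial.coeToPowerSeries.ringHom_apply, Polynomial.coe_X, map_X]
  ring

theorem _root_.Graham.cast_eq_closedForm {c : ℕ → ℤ}
    (h : mk c * (grahamDen : ℤ⟦X⟧) = grahamNum) (n : ℕ) : (c n : ℝ) = closedForm n := by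
  have hD : ((1 - X) ^ 2 * (1 - 3 * X ^ 2 - X ^ 4) * (1 - 2 * X ^ 2 - X ^ 4) : ℝ⟦X⟧) ≠ 0 :=
    fun h0 ↦ by simpa using congrArg constantCoeff h0
  have hℝ := congrArg (map (Int.castRingHom ℝ)) h
  rw [map_mul, map_grahamDen, map_grahamNum, ← mk_closedForm_mul] at hℝ
  simpa using congrArg (coeff n) (mul_right_cancel₀ hD hℝ)

end PowerSeries

namespace Graham

theorem three_lt_sqrt_thirteen : 3 < √13 :=
  Real.lt_sqrt (by norm_num) |>.mpr (by norm_num)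

theorem abs_sqrt_thirteen_sub_three_div_two_lt_one : |(√13 - 3) / 2| < 1 := by
  have h₁ := three_lt_sqrt_thirteen
  have h₂ : √13 < 4 := (Real.sqrt_lt' (by norm_num)).mpr (by norm_num)
  rw [abs_lt]
  constructor <;> linarith

theorem tendsto_binet_dominant (a b : ℝ) :
    Tendsto (fun k ↦ binet a b ((3 + √13) / 2) ((3 - √13) / 2) k * ((√13 - 3) / 2) ^ k) atTop
      (𝓝 a) := by
  have hs : √13 ^ 2 = 13 := Real.sq_sqrt (by norm_num)
  have h₁ := three_lt_sqrt_thirteen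
  have h₂ : √13 < 4 := (Real.sqrt_lt' (by norm_num)).mpr (by norm_num)
  have hx : (3 + √13) / 2 * ((√13 - 3) / 2) = 1 := by linear_combination hs / 4
  have hy : |(3 - √13) / 2 * ((√13 - 3) / 2)| < 1 := by
    rw [abs_lt]
    constructor <;> nlinarith
  simpa [hx] using tendsto_binet_mul_pow (a := a) (b := b) (l := 1) (by simp [hx]) hy

theorem tendsto_binet_subdominant (a b : ℝ) :
    Tendsto (fun k ↦ binet a b (1 + √2) (1 - √2) k * ((√13 - 3) / 2) ^ k) atTop (𝓝 0) := by
  have h₁ := three_lt_sqrt_thirteen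
  have h₂ : √13 < 3.61 := (Real.sqrt_lt' (by norm_num)).mpr (by norm_num)
  have h₃ : 1 < √2 := Real.lt_sqrt (by norm_num) |>.mpr (by norm_num)
  have h₄ : √2 < 1.42 := (Real.sqrt_lt' (by norm_num)).mpr (by norm_num)
  have hx : |(1 + √2) * ((√13 - 3) / 2)| < 1 := by
    rw [abs_lt]
    constructor <;> nlinarith
  have hy : |(1 - √2) * ((√13 - 3) / 2)| < 1 := by
    rw [abs_lt]
    constructor <;> nlinarith
  simpa using tendsto_binet_mul_pow (a := a) (b := b)
    (tendsto_pow_atTop_nhds_zero_of_abs_lt_one hx) hy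

theorem tendsto_closedForm_two_mul :
    Tendsto (fun k ↦ closedForm (2 * k) * ((√13 - 3) / 2) ^ k) atTop
      (𝓝 ((169 + 89 * √13) / 234)) := by
  have hl := tendsto_affine_mul_pow abs_sqrt_thirteen_sub_three_div_two_lt_one (-8) 6
  have hd : Tendsto (fun k ↦ dominantPart (2 * k) * ((√13 - 3) / 2) ^ k) atTop
      (𝓝 ((169 + 89 * √13) / 26)) := by
    simpa only [dominantPart, interleave_two_mul] using tendsto_binet_dominant _ _
  have hs : Tendsto (fun k ↦ subdominantPart (2 * k) * ((√13 - 3) / 2) ^ k) atTop (𝓝 0) := by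
    simpa only [subdominantPart, interleave_two_mul] using tendsto_binet_subdominant _ _
  convert ((hl.div_const 18).add (hd.div_const 9)).add (hs.div_const 2) using 2
  · simp only [closedForm, linearPart]
    push_cast
    ring
  · ring

theorem tendsto_closedForm_two_mul_add_one :
    Tendsto (fun k ↦ closedForm (2 * k + 1) * ((√13 - 3) / 2) ^ k) atTop
      (𝓝 ((221 + 43 * √13) / 117)) := by
  have hl := tendsto_affine_mul_pow abs_sqrt_thirteen_sub_three_div_two_lt_one (-5) 6
  have hd : Tendsto (fun k ↦ dominantPart (2 * k + 1) * ((√13 - 3) / 2) ^ k) atTop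
      (𝓝 ((221 + 43 * √13) / 13)) := by
    simpa only [dominantPart, interleave_two_mul_add_one] using tendsto_binet_dominant _ _
  have hs : Tendsto (fun k ↦ subdominantPart (2 * k + 1) * ((√13 - 3) / 2) ^ k) atTop
      (𝓝 0) := by
    simpa only [subdominantPart, interleave_two_mul_add_one] using tendsto_binet_subdominant _ _
  convert ((hl.div_const 18).add (hd.div_const 9)).add (hs.div_const 2) using 2
  · simp only [closedForm, linearPart]
    push_cast
    ring
  · ring

end Graham

/-- With `z = √((√13-3)/2)` the positive real root of `x^4 + 3x^2 - 1`,
the sequence `c_n z^n` is bounded, and converges along even and odd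
indices to the limits determined by the partial-fraction constants
`A = (89z² + 92z + 218 + 86/z)/234` and `B = (89z² - 92z + 218 - 86/z)/234`
(namely `A + B` along even `n` and `A - B` along odd `n`). -/
theorem graham_asymptotics (c : ℕ → ℤ)
    (h : PowerSeries.mk c * (grahamDen : PowerSeries ℤ) =
      (grahamNum : PowerSeries ℤ)) :
    let z : ℝ := Real.sqrt ((Real.sqrt 13 - 3) / 2)
    let A : ℝ := (89 * z ^ 2 + 92 * z + 218 + 86 / z) / 234
    let B : ℝ := (89 * z ^ 2 - 92 * z + 218 - 86 / z) / 234
    (∃ C : ℝ, ∀ n : ℕ, |(c n : ℝ) * z ^ n| ≤ C) ∧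
    Tendsto (fun k : ℕ => (c (2 * k) : ℝ) * z ^ (2 * k)) atTop (nhds (A + B)) ∧
    Tendsto (fun k : ℕ => (c (2 * k + 1) : ℝ) * z ^ (2 * k + 1)) atTop
      (nhds (A - B)) := by
  intro z A B
  have hs : √13 ^ 2 = 13 := Real.sq_sqrt (by norm_num)
  have hs₃ := Graham.three_lt_sqrt_thirteen
  have hz₂ : z ^ 2 = (√13 - 3) / 2 := Real.sq_sqrt (by linarith)
  have hz : 0 < z := Real.sqrt_pos.mpr (by linarith)
  have hsum : A + B = (169 + 89 * √13) / 234 := by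
    simp only [A, B]
    linear_combination (89 / 117) * hz₂
  have hdiff : A - B = z * ((221 + 43 * √13) / 117) := by
    have hinv : 86 / z = (129 + 43 * √13) * z := by
      rw [div_eq_iff hz.ne']
      linear_combination (-(129 + 43 * √13)) * hz₂ - (43 / 2) * hs
    simp only [A, B, hinv]
    ring
  have heven : Tendsto (fun k ↦ (c (2 * k) : ℝ) * z ^ (2 * k)) atTop (𝓝 (A + B)) := by
    rw [hsum]
    refine Graham.tendsto_closedForm_two_mul.congr fun k ↦ ?_
    rw [Graham.cast_eq_closedForm h, pow_mul, hz₂]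
  have hodd : Tendsto (fun k ↦ (c (2 * k + 1) : ℝ) * z ^ (2 * k + 1)) atTop (𝓝 (A - B)) := by
    rw [hdiff]
    refine (Graham.tendsto_closedForm_two_mul_add_one.const_mul z).congr fun k ↦ ?_
    rw [Graham.cast_eq_closedForm h, pow_succ, pow_mul, hz₂]
    ring
  exact ⟨exists_forall_abs_le_of_tendsto_even_odd heven hodd, heven, hodd⟩
end
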